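/- Let p be a prime, d ≥ 1 an integer, ε ∈ {0,1}^{d-1} a fixed vector, and a, b ∈ ℤ_p^d. If P^{a,ε}_{d,p} ≠ P^{b,ε}_{d,p}, then P^{a,ε}_{d,p} ∩ P^{b,ε}_{d,p} = {(0,...,0)}. -/

import Mathlib

/-!
A coordinate of `x_j^{a,ε}` is the fractional part of an integer over `p`, so it only sees that
integer modulo `p`. Modulo `p` the coordinates form a triangular system: the `i`-th one is
`a_i j^i` plus a combination of the earlier terms `a_h j^h`, so `x_j^{a,ε} = x_k^{b,ε}` holds
exactly when `a_i j^i ≡ b_i k^i` for every `i`. A common point other than the origin has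
`j, k ≢ 0`, and then `j' ↦ (k / j) j'` carries `x_{j'}^{a,ε}` to `x_{(k/j) j'}^{b,ε}`, and
symmetrically, so the two sets coincide.
-/

/-- The `i`-th coordinate (for `i = 1,…,d`) of the `j`-th point of the generalized
`p`-set with parameters `a` and `ε` (and `a'_h = ε_h * a_h`), namely the fractional
part of `(∑_{h=1}^{i-1} a'_h j^h + a_i j^i) / N`. -/
noncomputable def genCoord (N : ℕ) (a ε : ℕ → ℤ) (j i : ℕ) : ℝ :=
  Int.fract ((((∑ h ∈ Finset.Ico 1 i, ε h * a h * (j : ℤ) ^ h) + a i * (j : ℤ) ^ i : ℤ) : ℝ) / (N : ℝ))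

/-- The point `x_j^{a,ε} ∈ [0,1)^d` of the generalized `p`-set. -/
noncomputable def genPoint (p d : ℕ) (a ε : ℕ → ℤ) (j : ℕ) : Fin d → ℝ :=
  fun i => genCoord p a ε j (i.1 + 1)

/-- The generalized `p`-set `P^{a,ε}_{d,p} = {x_j^{a,ε} : j = 0,…,p-1} ⊂ [0,1)^d`. -/
noncomputable def genPset (p d : ℕ) (a ε : ℕ → ℤ) : Set (Fin d → ℝ) :=
  {x | ∃ j < p, x = genPoint p d a ε j}

open Finset

theorem Int.fract_intCast_div_eq_iff {k : Type*} [Field k] [LinearOrder k] [IsOrderedRing k]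
    [FloorRing k] {p : ℕ} (hp : p ≠ 0) (m n : ℤ) :
    Int.fract ((m : k) / p) = Int.fract ((n : k) / p) ↔ (m : ZMod p) = n := by
  rw [Int.fract_div_intCast_eq_div_intCast_mod, Int.fract_div_intCast_eq_div_intCast_mod,
    div_left_inj' (Nat.cast_ne_zero.mpr hp), Int.cast_inj, ZMod.intCast_eq_intCast_iff']

theorem forall_mem_Icc_one_iff_forall_fin {d : ℕ} {P : ℕ → Prop} :
    (∀ i ∈ Icc 1 d, P i) ↔ ∀ i : Fin d, P (i + 1) := by
  refine ⟨fun h i => h _ (mem_Icc.mpr ⟨by omega, by omega⟩), fun h i hi => ?_⟩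
  obtain ⟨hi1, hid⟩ := mem_Icc.mp hi
  simpa [Nat.sub_add_cancel hi1] using h ⟨i - 1, by omega⟩

theorem forall_sum_Ico_mul_add_eq_iff {R : Type*} [Ring R] (c f g : ℕ → R) (d : ℕ) :
    (∀ i ∈ Icc 1 d, ∑ h ∈ Ico 1 i, c h * f h + f i = ∑ h ∈ Ico 1 i, c h * g h + g i) ↔
      ∀ i ∈ Icc 1 d, f i = g i := by
  have sum_eq {i : ℕ} (hfg : ∀ h ∈ Ico 1 i, f h = g h) :
      ∑ h ∈ Ico 1 i, c h * f h = ∑ h ∈ Ico 1 i, c h * g h :=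
    sum_congr rfl fun h hh => by rw [hfg h hh]
  have mem_Icc_of_mem_Ico {i h : ℕ} (hi : i ∈ Icc 1 d) (hh : h ∈ Ico 1 i) : h ∈ Icc 1 d := by
    grind
  refine ⟨fun H i => ?_, fun H i hi => ?_⟩
  · induction i using Nat.strong_induction_on with
    | _ i ih =>
      intro hi
      have hprev : ∀ h ∈ Ico 1 i, f h = g h :=
        fun h hh => ih h (mem_Ico.mp hh).2 (mem_Icc_of_mem_Ico hi hh)
      simpa only [sum_eq hprev, add_right_inj] using H i hi
  · rw [sum_eq fun h hh => H h (mem_Icc_of_mem_Ico hi hh), H i hi]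

section GenPset

variable {p d : ℕ} {a b ε : ℕ → ℤ}

theorem genPoint_eq_genPoint_iff (hp : p ≠ 0) (j k : ℕ) :
    genPoint p d a ε j = genPoint p d b ε k ↔
      ∀ i ∈ Icc 1 d, (a i : ZMod p) * (j : ZMod p) ^ i = (b i : ZMod p) * (k : ZMod p) ^ i := by
  simp only [funext_iff, genPoint]
  rw [← forall_mem_Icc_one_iff_forall_fin (P := fun i => genCoord p a ε j i = genCoord p b ε k i),
    ← forall_sum_Ico_mul_add_eq_iff (fun h => (ε h : ZMod p))]
  refine forall₂_congr fun i _ => ?_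
  rw [genCoord, genCoord, Int.fract_intCast_div_eq_iff hp]
  push_cast
  simp only [mul_assoc]

theorem genPoint_zero : genPoint p d a ε 0 = 0 := by
  funext i
  have hnum : ∑ h ∈ Ico 1 (i.1 + 1), ε h * a h * (0 : ℤ) ^ h = 0 :=
    sum_eq_zero fun h hh => by rw [zero_pow (by grind), mul_zero]
  simp only [genPoint, genCoord, Nat.cast_zero, hnum, zero_pow i.1.succ_ne_zero, mul_zero,
    add_zero, Int.cast_zero, zero_div, Int.fract_zero, Pi.zero_apply]

theorem genPoint_eq_zero_of_natCast_eq_zero (hp : p ≠ 0) {j : ℕ} (hj : (j : ZMod p) = 0) :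
    genPoint p d a ε j = 0 := by
  rw [← genPoint_zero (a := a), genPoint_eq_genPoint_iff hp]
  simp [hj]

theorem zero_mem_genPset (hp : p ≠ 0) : (0 : Fin d → ℝ) ∈ genPset p d a ε :=
  ⟨0, Nat.pos_of_ne_zero hp, genPoint_zero.symm⟩

theorem genPset_subset_of_mul_pow_eq (hp : p.Prime) {j k : ℕ} (hj : (j : ZMod p) ≠ 0)
    (h : ∀ i ∈ Icc 1 d, (a i : ZMod p) * (j : ZMod p) ^ i = (b i : ZMod p) * (k : ZMod p) ^ i) :
    genPset p d a ε ⊆ genPset p d b ε := by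
  have := Fact.mk hp
  rintro _ ⟨j', -, rfl⟩
  refine ⟨(k / j * j' : ZMod p).val, ZMod.val_lt _, ?_⟩
  refine (genPoint_eq_genPoint_iff hp.ne_zero _ _).2 fun i hi => ?_
  rw [ZMod.natCast_zmod_val, mul_pow, div_pow, ← mul_assoc, ← mul_div_assoc, ← h i hi]
  field_simp

end GenPset

theorem gen_pset_inter_of_ne_general (p d : ℕ) (hp : p.Prime) (ε : ℕ → ℤ) (a b : ℕ → ℤ)
    (hne : genPset p d a ε ≠ genPset p d b ε) :
    genPset p d a ε ∩ genPset p d b ε = {0} := by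
  refine Set.Subset.antisymm ?_ (Set.singleton_subset_iff.mpr
    ⟨zero_mem_genPset hp.ne_zero, zero_mem_genPset hp.ne_zero⟩)
  rintro _ ⟨⟨j, -, rfl⟩, k, -, hjk⟩
  by_contra hx
  have hterms := (genPoint_eq_genPoint_iff hp.ne_zero j k).1 hjk
  have hj : (j : ZMod p) ≠ 0 := fun h => hx (genPoint_eq_zero_of_natCast_eq_zero hp.ne_zero h)
  have hk : (k : ZMod p) ≠ 0 := fun h => hx (hjk ▸ genPoint_eq_zero_of_natCast_eq_zero hp.ne_zero h)
  exact hne (Set.Subset.antisymm (genPset_subset_of_mul_pow_eq hp hj hterms)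
    (genPset_subset_of_mul_pow_eq hp hk fun i hi => (hterms i hi).symm))

/-- For a fixed `ε ∈ {0,1}^{d-1}` and `a, b ∈ ℤ_p^d`: if the generalized `p`-sets
`P^{a,ε}_{d,p}` and `P^{b,ε}_{d,p}` are different, then they intersect only in the
origin `(0,…,0)`. -/
theorem gen_pset_inter_of_ne (p d : ℕ) (hp : p.Prime) (hd : 1 ≤ d) (ε : ℕ → ℤ)
    (hε : ∀ i ∈ Finset.Icc 1 (d - 1), ε i = 0 ∨ ε i = 1) (a b : ℕ → ℤ)
    (ha : ∀ i ∈ Finset.Icc 1 d, 0 ≤ a i ∧ a i ≤ (p : ℤ) - 1)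
    (hb : ∀ i ∈ Finset.Icc 1 d, 0 ≤ b i ∧ b i ≤ (p : ℤ) - 1)
    (hne : genPset p d a ε ≠ genPset p d b ε) :
    genPset p d a ε ∩ genPset p d b ε = {0} :=
  gen_pset_inter_of_ne_general p d hp ε a b hne
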